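/- arXiv:2002.03569 — 8 statements merged into one kernel-verified Lean document; each statement's English description precedes it below -/
import Mathlib

section
/- If p·k ≤ 1, then for all q ∈ (0,1], f_p(q) < q, where f_p(q) = 1 - (1 - p·q)^k with k ≥ 2; hence 0 is the only fixed point of f_p in [0,1]. -/
theorem one_sub_one_sub_pow_lt_mul {x : ℝ} (hx₀ : 0 < x) (hx₁ : x ≤ 1) {n : ℕ} (hn : 2 ≤ n) :
    1 - (1 - x) ^ n < n * x := by
  have hn' : (1 : ℝ) < n := by exact_mod_cast hn
  have h := one_add_mul_self_lt_rpow_one_add (by linarith : -1 ≤ -x) (neg_ne_zero.2 hx₀.ne') hn'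
  rw [Real.rpow_natCast, ← sub_eq_add_neg] at h
  linarith

theorem stmt2 (p : ℝ) (hp : p ∈ Set.Icc (0:ℝ) 1) (k : ℕ) (hk : 2 ≤ k)
    (hpk : p * k ≤ 1) :
    (∀ q ∈ Set.Ioc (0:ℝ) 1, 1 - (1 - p*q)^k < q) ∧
    (∀ q ∈ Set.Icc (0:ℝ) 1, 1 - (1 - p*q)^k = q → q = 0) := by
  obtain ⟨hp₀, hp₁⟩ := hp
  have below : ∀ q ∈ Set.Ioc (0:ℝ) 1, 1 - (1 - p*q)^k < q := by
    rintro q ⟨hq₀, hq₁⟩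
    rcases hp₀.eq_or_lt with rfl | hp_pos
    · simpa using hq₀
    calc 1 - (1 - p*q)^k < k * (p*q) :=
          one_sub_one_sub_pow_lt_mul (mul_pos hp_pos hq₀) (mul_le_one₀ hp₁ hq₀.le hq₁) hk
      _ = (p * k) * q := by ring
      _ ≤ q := mul_le_of_le_one_left hq₀.le hpk
  refine ⟨below, fun q ⟨hq₀, hq₁⟩ hfix => ?_⟩
  by_contra hq
  exact (below q ⟨lt_of_le_of_ne hq₀ (Ne.symm hq), hq₁⟩).ne hfix
end

section
/- For k ≥ 2 and p ∈ (1/k, 1], if q* ∈ (0,1] is a fixed point of f_p(q) = 1 - (1-p·q)^k, then the derivative f_p'(0) = p·k > 1 and f_p'(q*) < 1. -/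
/-!
Put `y = 1 - p q*`. The fixed-point equation reads `1 - y = p (1 - y^k)`, i.e. `p ∑_{i<k} y^i = 1`,
while `f_p'(q*) = p k y^(k-1)`. For `0 ≤ y < 1` every term `y^i` with `i < k` is at least `y^(k-1)`,
and the term `y^0 = 1` is strictly larger, so `f_p'(q*) < p ∑_{i<k} y^i = 1`.
-/

open Finset

theorem deriv_one_sub_one_sub_mul_pow (p x : ℝ) (k : ℕ) :
    deriv (fun q : ℝ => 1 - (1 - p * q) ^ k) x = p * k * (1 - p * x) ^ (k - 1) := by
  have hlin : HasDerivAt (fun q : ℝ => 1 - p * q) (-p) x := by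
    simpa using ((hasDerivAt_id x).const_mul p).const_sub 1
  have hf : HasDerivAt (fun q : ℝ => 1 - (1 - p * q) ^ k)
      (-(k * (1 - p * x) ^ (k - 1) * -p)) x := (hlin.pow k).const_sub 1
  rw [hf.deriv]
  ring

theorem nat_mul_pow_pred_lt_geom_sum {y : ℝ} (hy0 : 0 ≤ y) (hy1 : y < 1) {k : ℕ} (hk : 2 ≤ k) :
    k * y ^ (k - 1) < ∑ i ∈ range k, y ^ i := by
  have hlt : ∑ _i ∈ range k, y ^ (k - 1) < ∑ i ∈ range k, y ^ i := by
    refine sum_lt_sum (fun i hi => ?_) ⟨0, mem_range.mpr (by omega), ?_⟩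
    · exact pow_le_pow_of_le_one hy0 hy1.le (by have := mem_range.mp hi; omega)
    · simpa using pow_lt_one₀ hy0 hy1 (by omega)
  simpa using hlt

theorem mul_geom_sum_eq_one_of_fixed_point {p q : ℝ} {k : ℕ} (hq : q ≠ 0)
    (hfix : 1 - (1 - p * q) ^ k = q) :
    p * ∑ i ∈ range k, (1 - p * q) ^ i = 1 := by
  have hgeom := geom_sum_mul (1 - p * q) k
  refine mul_right_cancel₀ hq ?_
  linear_combination -hgeom + hfix

theorem stmt4 (p : ℝ) (k : ℕ) (hk : 2 ≤ k) (hp1 : 1/(k:ℝ) < p) (hp2 : p ≤ 1)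
    (qs : ℝ) (hqs : qs ∈ Set.Ioc (0:ℝ) 1) (hfix : 1 - (1 - p*qs)^k = qs) :
    deriv (fun q : ℝ => 1 - (1 - p*q)^k) 0 = p * k ∧ 1 < p * k ∧
    deriv (fun q : ℝ => 1 - (1 - p*q)^k) qs < 1 := by
  obtain ⟨hqs0, hqs1⟩ := hqs
  have hk0 : (0 : ℝ) < k := by positivity
  have hp0 : 0 < p := lt_trans (by positivity) hp1
  have hpk : 1 < p * k := by rwa [div_lt_iff₀ hk0] at hp1
  refine ⟨by simp [deriv_one_sub_one_sub_mul_pow], hpk, ?_⟩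
  have hy0 : 0 ≤ 1 - p * qs := by nlinarith
  have hy1 : 1 - p * qs < 1 := by nlinarith
  calc deriv (fun q : ℝ => 1 - (1 - p * q) ^ k) qs
      = p * (k * (1 - p * qs) ^ (k - 1)) := by rw [deriv_one_sub_one_sub_mul_pow]; ring
    _ < p * ∑ i ∈ range k, (1 - p * qs) ^ i :=
        mul_lt_mul_of_pos_left (nat_mul_pow_pred_lt_geom_sum hy0 hy1 hk) hp0
    _ = 1 := mul_geom_sum_eq_one_of_fixed_point hqs0.ne' hfix
end

section
/- Let k ≥ 2, p ∈ (1/k, 1], and let q* ∈ (0,1] be the unique positive fixed point of f_p(q) = 1 - (1-p·q)^k. Then for any q_0 ∈ (0,1], the sequence q_t = f_p(q_{t-1}) converges to q*, and the convergence is monotone (increasing if q_0 < q*, decreasing if q_0 > q*). -/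
/-!
The map `f = f_p` is continuous, increasing on `[0, 1]`, maps `(0, 1]` into itself and has
`f'(0) = k p > 1`, so `f q > q` just to the right of `0`. Since `q*` is its only fixed point in
`(0, 1]`, the intermediate value theorem forces `f q > q` on `(0, q*)` and `f q < q` on `(q*, 1]`.
Hence an orbit started below (above) `q*` stays there and increases (decreases); its limit is a
fixed point by continuity, and the strict inequalities leave only `q*`.
-/

open Filter Set Topology

section RecurrenceConvergence

variable {α : Type*} [ConditionallyCompleteLinearOrder α] [TopologicalSpace α] [OrderTopology α]
  {f : α → α} {u : ℕ → α} {c : α}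

theorem monotone_and_tendsto_of_lt_map (hf : Continuous f) (hmono : MonotoneOn f (Icc (u 0) c))
    (hc : f c = c) (hlt : ∀ x ∈ Ico (u 0) c, x < f x) (hu0 : u 0 ≤ c)
    (hu : ∀ n, u (n + 1) = f (u n)) :
    Monotone u ∧ Tendsto u atTop (𝓝 c) := by
  have hstep : ∀ x ∈ Icc (u 0) c, f x ∈ Icc x c := fun x hx =>
    ⟨hx.2.eq_or_lt.elim (fun h => h ▸ hc.ge) fun h => (hlt x ⟨hx.1, h⟩).le,
      hc ▸ hmono hx ⟨hu0, le_rfl⟩ hx.2⟩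
  have hmem : ∀ n, u n ∈ Icc (u 0) c := by
    intro n
    induction n with
    | zero => exact ⟨le_rfl, hu0⟩
    | succ n ih => rw [hu]; exact ⟨ih.1.trans (hstep _ ih).1, (hstep _ ih).2⟩
  have hmon : Monotone u := monotone_nat_of_le_succ fun n => (hu n).symm ▸ (hstep _ (hmem n)).1
  have hbdd : BddAbove (range u) := ⟨c, forall_mem_range.2 fun n => (hmem n).2⟩
  have hL := tendsto_atTop_ciSup hmon hbdd
  have hfix : f (⨆ n, u n) = ⨆ n, u n := by
    refine tendsto_nhds_unique ?_ (hL.comp (tendsto_add_atTop_nat 1))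
    simpa only [Function.comp_def, hu] using (hf.tendsto _).comp hL
  have hLc : (⨆ n, u n) = c := by
    refine (ciSup_le fun n => (hmem n).2).antisymm (not_lt.1 fun hlt' => ?_)
    exact (hlt _ ⟨le_ciSup hbdd 0, hlt'⟩).ne' hfix
  exact ⟨hmon, hLc ▸ hL⟩

theorem antitone_and_tendsto_of_map_lt (hf : Continuous f) (hmono : MonotoneOn f (Icc c (u 0)))
    (hc : f c = c) (hlt : ∀ x ∈ Ioc c (u 0), f x < x) (hu0 : c ≤ u 0)
    (hu : ∀ n, u (n + 1) = f (u n)) :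
    Antitone u ∧ Tendsto u atTop (𝓝 c) :=
  monotone_and_tendsto_of_lt_map (α := αᵒᵈ) (f := OrderDual.toDual ∘ f ∘ OrderDual.ofDual)
    (u := OrderDual.toDual ∘ u) hf (fun _ hx _ hy hxy => hmono ⟨hy.2, hy.1⟩ ⟨hx.2, hx.1⟩ hxy)
    hc (fun x hx => hlt x ⟨hx.2, hx.1⟩) hu0 hu

end RecurrenceConvergence

theorem eventually_mul_lt_of_hasDerivAt_zero {g : ℝ → ℝ} {g' c : ℝ} (hg : HasDerivAt g g' 0)
    (hg0 : g 0 = 0) (hc : c < g') : ∀ᶠ t in 𝓝[>] 0, c * t < g t := by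
  filter_upwards [hg.tendsto_slope_zero_right.eventually (lt_mem_nhds hc), self_mem_nhdsWithin]
    with t hslope (ht : 0 < t)
  rw [zero_add, hg0, sub_zero, smul_eq_mul, lt_inv_mul_iff₀ ht] at hslope
  linarith

section FixedPointSign

variable {f : ℝ → ℝ} {a b x : ℝ}

theorem lt_map_of_mem_Ioo_of_map_ne (hf : ContinuousOn f (Ioo a b))
    (hnear : ∀ᶠ t in 𝓝[>] a, t ≤ f t) (hne : ∀ y ∈ Ioo a b, f y ≠ y) (hx : x ∈ Ioo a b) :
    x < f x := by
  by_contra! hfx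
  obtain ⟨y, hy, hfy⟩ := isPreconnected_Ioo.intermediate_value₂_eventually₁ hx
    (le_principal_iff.2 (Ioo_mem_nhdsGT (hx.1.trans hx.2))) hf continuousOn_id hfx hnear
  exact hne y hy hfy

theorem map_lt_of_mem_Ioc_of_map_ne (hf : ContinuousOn f (Ioc a b)) (hb : f b ≤ b)
    (hne : ∀ y ∈ Ioc a b, f y ≠ y) (hx : x ∈ Ioc a b) : f x < x := by
  by_contra! hfx
  obtain ⟨y, hy, hfy⟩ := isPreconnected_Ioc.intermediate_value₂ hx ⟨hx.1.trans_le hx.2, le_rfl⟩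
    continuousOn_id hf hfx hb
  exact hne y hy hfy.symm

end FixedPointSign

/-- The map `f_p` of the paper. -/
def survivalMap (p : ℝ) (k : ℕ) (q : ℝ) : ℝ := 1 - (1 - p * q) ^ k

section SurvivalMap

variable {p : ℝ} {k : ℕ}

theorem continuous_survivalMap : Continuous (survivalMap p k) := by
  unfold survivalMap; fun_prop

theorem hasDerivAt_survivalMap_zero : HasDerivAt (survivalMap p k) (k * p) 0 := by
  have := (((hasDerivAt_id (0 : ℝ)).const_mul p).const_sub 1).pow k |>.const_sub 1
  unfold survivalMap
  simpa using this

theorem survivalMap_zero : survivalMap p k 0 = 0 := by simp [survivalMap]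

theorem survivalMap_mem_Ioc (hp0 : 0 < p) (hp1 : p ≤ 1) (hk : k ≠ 0) {q : ℝ}
    (hq : q ∈ Ioc 0 1) : survivalMap p k q ∈ Ioc 0 1 := by
  have hpq : 0 < p * q := mul_pos hp0 hq.1
  have hpq1 : p * q ≤ 1 := mul_le_one₀ hp1 hq.1.le hq.2
  constructor
  · have := pow_lt_one₀ (sub_nonneg.2 hpq1) (sub_lt_self 1 hpq) hk
    simp only [survivalMap]; linarith
  · have := pow_nonneg (sub_nonneg.2 hpq1) k
    simp only [survivalMap]; linarith

theorem monotoneOn_survivalMap (hp0 : 0 ≤ p) (hp1 : p ≤ 1) :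
    MonotoneOn (survivalMap p k) (Icc 0 1) := fun x hx y hy hxy =>
  sub_le_sub_left (pow_le_pow_left₀ (by nlinarith [hy.2]) (by nlinarith [hx.1]) k) 1

end SurvivalMap

theorem stmt5 (p : ℝ) (k : ℕ) (hk : 2 ≤ k) (hp1 : 1/(k:ℝ) < p) (hp2 : p ≤ 1)
    (qs : ℝ) (hqs : qs ∈ Set.Ioc (0:ℝ) 1) (hfix : 1 - (1 - p*qs)^k = qs)
    (huniq : ∀ q ∈ Set.Ioc (0:ℝ) 1, 1 - (1 - p*q)^k = q → q = qs)
    (a : ℕ → ℝ) (h0 : a 0 ∈ Set.Ioc (0:ℝ) 1)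
    (hrec : ∀ t, a (t+1) = 1 - (1 - p * a t)^k) :
    Filter.Tendsto a Filter.atTop (nhds qs) ∧
    (a 0 < qs → Monotone a) ∧ (qs < a 0 → Antitone a) := by
  have hk0 : k ≠ 0 := by omega
  have hkp : 1 < k * p := by rwa [div_lt_iff₀' (by positivity)] at hp1
  have hp0 : 0 < p := (by positivity : 0 < 1 / (k : ℝ)).trans hp1
  obtain ⟨hqs0, hqs1⟩ := hqs
  have hne : ∀ x ∈ Ioc 0 1, x ≠ qs → survivalMap p k x ≠ x :=
    fun x hx hx' h => hx' (huniq x hx h)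
  have hbelow : ∀ x ∈ Ioo 0 qs, x < survivalMap p k x :=
    fun x => lt_map_of_mem_Ioo_of_map_ne continuous_survivalMap.continuousOn
      ((eventually_mul_lt_of_hasDerivAt_zero hasDerivAt_survivalMap_zero survivalMap_zero hkp).mono
        fun t ht => by linarith)
      fun y hy => hne y ⟨hy.1, hy.2.le.trans hqs1⟩ hy.2.ne
  have habove : ∀ x ∈ Ioc qs 1, survivalMap p k x < x :=
    fun x => map_lt_of_mem_Ioc_of_map_ne continuous_survivalMap.continuousOn
      (survivalMap_mem_Ioc hp0 hp2 hk0 ⟨one_pos, le_rfl⟩).2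
      fun y hy => hne y ⟨hqs0.trans hy.1, hy.2⟩ hy.1.ne'
  have hmono := monotoneOn_survivalMap (k := k) hp0.le hp2
  rcases le_total (a 0) qs with hle | hge
  · obtain ⟨hmon, hlim⟩ := monotone_and_tendsto_of_lt_map continuous_survivalMap
      (hmono.mono (Icc_subset_Icc h0.1.le hqs1)) hfix
      (fun x hx => hbelow x ⟨h0.1.trans_le hx.1, hx.2⟩) hle hrec
    exact ⟨hlim, fun _ => hmon, fun h => absurd hle h.not_ge⟩
  · obtain ⟨hant, hlim⟩ := antitone_and_tendsto_of_map_lt continuous_survivalMap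
      (hmono.mono (Icc_subset_Icc hqs0.le h0.2)) hfix
      (fun x hx => habove x ⟨hx.1, hx.2.trans h0.2⟩) hge hrec
    exact ⟨hlim, fun h => absurd hge h.not_ge, fun _ => hant⟩
end

section
/- Let k ≥ 2 and p ∈ [0, 1/k]. Then for any q_0 ∈ [0,1], the sequence defined by q_t = f_p(q_{t-1}), with f_p(q) = 1 - (1-p·q)^k, converges monotonically (nonincreasing) to 0. -/
/-!
By the strict Bernoulli inequality, `f_p q < k p q ≤ q` for `q ∈ (0, 1]` (and `f_p q = 0` if
`p = 0`), while `f_p` maps `[0, 1]` into itself and fixes `0`. Hence every orbit in `[0, 1]`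
decreases to a fixed point of `f_p` in `[0, 1]`, and `0` is the only one.
-/

open Set Filter Topology

theorem antitone_iterate_and_tendsto_zero {f : ℝ → ℝ} {c x : ℝ} (hf : Continuous f)
    (hmaps : MapsTo f (Icc 0 c) (Icc 0 c)) (hf0 : f 0 = 0) (hlt : ∀ y ∈ Ioc 0 c, f y < y)
    (hx : x ∈ Icc 0 c) :
    Antitone (fun n ↦ f^[n] x) ∧ Tendsto (fun n ↦ f^[n] x) atTop (𝓝 0) := by
  have hmem (n : ℕ) : f^[n] x ∈ Icc 0 c := hmaps.iterate n hx
  have hle : ∀ y ∈ Icc 0 c, f y ≤ y := by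
    rintro y ⟨hy0, hyc⟩
    rcases hy0.eq_or_lt with rfl | hy0
    · exact hf0.le
    · exact (hlt y ⟨hy0, hyc⟩).le
  have hanti : Antitone (fun n ↦ f^[n] x) := antitone_nat_of_succ_le fun n ↦ by
    simpa only [Function.iterate_succ_apply'] using hle _ (hmem n)
  refine ⟨hanti, ?_⟩
  obtain ⟨L, hL⟩ : ∃ L, Tendsto (fun n ↦ f^[n] x) atTop (𝓝 L) :=
    ⟨_, tendsto_atTop_ciInf hanti ⟨0, by rintro _ ⟨n, rfl⟩; exact (hmem n).1⟩⟩
  have hLmem : L ∈ Icc 0 c := isClosed_Icc.mem_of_tendsto hL (Eventually.of_forall hmem)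
  have hfix : f L = L := isFixedPt_of_tendsto_iterate hL hf.continuousAt
  obtain rfl : L = 0 := by
    by_contra hL0
    exact (hlt L ⟨lt_of_le_of_ne hLmem.1 (Ne.symm hL0), hLmem.2⟩).ne hfix
  exact hL

theorem one_sub_one_sub_pow_lt_mul_s6 {k : ℕ} {x : ℝ} (hk : 2 ≤ k) (hx0 : 0 < x) (hx1 : x ≤ 1) :
    1 - (1 - x) ^ k < k * x := by
  have := one_add_mul_self_lt_rpow_one_add (s := -x) (by linarith) (by linarith)
    (p := k) (by exact_mod_cast hk)
  rw [Real.rpow_natCast, ← sub_eq_add_neg] at this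
  linarith

theorem one_sub_one_sub_pow_mem_Icc {k : ℕ} {x : ℝ} (hx : x ∈ Icc (0 : ℝ) 1) :
    1 - (1 - x) ^ k ∈ Icc (0 : ℝ) 1 := by
  obtain ⟨hx0, hx1⟩ := hx
  constructor
  · linarith [pow_le_one₀ (n := k) (sub_nonneg.2 hx1) (by linarith : 1 - x ≤ 1)]
  · linarith [pow_nonneg (n := k) (sub_nonneg.2 hx1)]

theorem stmt6 (p : ℝ) (k : ℕ) (hk : 2 ≤ k) (hp : p ∈ Set.Icc (0:ℝ) (1/(k:ℝ)))
    (a : ℕ → ℝ) (h0 : a 0 ∈ Set.Icc (0:ℝ) 1)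
    (hrec : ∀ t, a (t+1) = 1 - (1 - p * a t)^k) :
    Antitone a ∧ Filter.Tendsto a Filter.atTop (nhds 0) := by
  set f : ℝ → ℝ := fun q ↦ 1 - (1 - p * q) ^ k
  obtain ⟨hp0, hpk⟩ := hp
  have hk0 : (0 : ℝ) < k := by positivity
  have hkp : k * p ≤ 1 := by rwa [le_div_iff₀ hk0, mul_comm] at hpk
  have hp1 : p ≤ 1 := by
    have hk1 : (1 : ℝ) ≤ k := by exact_mod_cast one_le_two.trans hk
    nlinarith
  have hpq {q : ℝ} (hq : q ∈ Icc (0 : ℝ) 1) : p * q ∈ Icc (0 : ℝ) 1 :=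
    ⟨mul_nonneg hp0 hq.1, mul_le_one₀ hp1 hq.1 hq.2⟩
  have hmaps : MapsTo f (Icc 0 1) (Icc 0 1) := fun q hq ↦ one_sub_one_sub_pow_mem_Icc (hpq hq)
  have hlt : ∀ q ∈ Ioc (0 : ℝ) 1, f q < q := by
    rintro q ⟨hq0, hq1⟩
    rcases hp0.eq_or_lt with rfl | hp0
    · simpa [f] using hq0
    calc f q < k * (p * q) := one_sub_one_sub_pow_lt_mul_s6 hk (by positivity) (hpq ⟨hq0.le, hq1⟩).2
      _ = (k * p) * q := by ring
      _ ≤ q := mul_le_of_le_one_left hq0.le hkp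
  have ha : a = fun n ↦ f^[n] (a 0) := funext fun n ↦ by
    induction n with
    | zero => rfl
    | succ n ih => rw [hrec, ih, Function.iterate_succ_apply']
  rw [ha]
  exact antitone_iterate_and_tendsto_zero (by fun_prop) hmaps (by simp [f]) hlt h0
end

section
/- For k ≥ 2 an integer, define the map p ↦ q*(p) on (1/k, 1] where q*(p) is the unique positive fixed point of f_p(q) = 1 - (1-p·q)^k. Then q* is strictly increasing on (1/k, 1]. -/
/-!
Write `g_p(q) = 1 - (1 - p q)^k`. Convexity of `y ↦ y^k` makes `g_p` concave with `g_p(0) = 0`,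
so `g_p(q) / q` is nonincreasing in `q`; and `g_p(q)` is strictly increasing in `p` for `q > 0`.
If `p₁ < p₂` had fixed points `q₂ ≤ q₁`, then `g_{p₂}(q₂) > g_{p₁}(q₂) ≥ (q₂ / q₁) g_{p₁}(q₁) = q₂`,
contradicting `g_{p₂}(q₂) = q₂`.
-/

lemma pow_one_sub_mul_le (k : ℕ) {x t : ℝ} (hx : x ≤ 1) (ht₀ : 0 ≤ t) (ht₁ : t ≤ 1) :
    (1 - t * x) ^ k ≤ t * (1 - x) ^ k + (1 - t) := by
  have hconv := (convexOn_pow k).2 (Set.mem_Ici.2 (sub_nonneg.2 hx)) (Set.mem_Ici.2 zero_le_one)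
    ht₀ (sub_nonneg.2 ht₁) (add_sub_cancel t 1)
  simp only [smul_eq_mul, mul_one, one_pow] at hconv
  rwa [(by ring : t * (1 - x) + (1 - t) = 1 - t * x)] at hconv

lemma fixedPoint_lt_of_lt {k : ℕ} (hk : k ≠ 0) {p₁ p₂ q₁ q₂ : ℝ} (hp : p₁ < p₂)
    (hq₁ : 0 < q₁) (hq₂ : 0 < q₂) (hpq₁ : p₁ * q₁ ≤ 1) (hpq₂ : p₂ * q₂ ≤ 1)
    (h₁ : 1 - (1 - p₁ * q₁) ^ k = q₁) (h₂ : 1 - (1 - p₂ * q₂) ^ k = q₂) :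
    q₁ < q₂ := by
  by_contra! hle
  have ht : q₂ / q₁ * q₁ = q₂ := div_mul_cancel₀ q₂ hq₁.ne'
  have hconcave : (1 - p₁ * q₂) ^ k ≤ 1 - q₂ := by
    have := pow_one_sub_mul_le k hpq₁ (div_nonneg hq₂.le hq₁.le) ((div_le_one hq₁).2 hle)
    rw [(by linear_combination p₁ * ht : q₂ / q₁ * (p₁ * q₁) = p₁ * q₂)] at this
    linear_combination this - q₂ / q₁ * h₁ - ht
  have hmono : (1 - p₂ * q₂) ^ k < (1 - p₁ * q₂) ^ k :=
    pow_lt_pow_left₀ (by nlinarith) (sub_nonneg.2 hpq₂) hk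
  linarith

theorem stmt7_general (k : ℕ) (qstar : ℝ → ℝ)
    (h : ∀ p ∈ Set.Ioc (1/(k:ℝ)) 1,
      qstar p ∈ Set.Ioc (0:ℝ) 1 ∧ 1 - (1 - p * qstar p)^k = qstar p) :
    StrictMonoOn qstar (Set.Ioc (1/(k:ℝ)) 1) := by
  intro p₁ hp₁ p₂ hp₂ hp
  obtain ⟨⟨hq₁, hq₁'⟩, h₁⟩ := h p₁ hp₁
  obtain ⟨⟨hq₂, hq₂'⟩, h₂⟩ := h p₂ hp₂
  have hk : k ≠ 0 := by
    rintro rfl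
    simp only [pow_zero, sub_self] at h₂
    exact hq₂.ne h₂
  exact fixedPoint_lt_of_lt hk hp hq₁ hq₂ (mul_le_one₀ (hp.le.trans hp₂.2) hq₁.le hq₁')
    (mul_le_one₀ hp₂.2 hq₂.le hq₂') h₁ h₂

theorem stmt7 (k : ℕ) (hk : 2 ≤ k) (qstar : ℝ → ℝ)
    (h : ∀ p ∈ Set.Ioc (1/(k:ℝ)) 1,
      qstar p ∈ Set.Ioc (0:ℝ) 1 ∧ 1 - (1 - p * qstar p)^k = qstar p) :
    StrictMonoOn qstar (Set.Ioc (1/(k:ℝ)) 1) :=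
  stmt7_general k qstar h
end

section
/- For k ≥ 2 an integer, the function q*(p) (the unique positive fixed point of f_p(q) = 1 - (1-p·q)^k for p > 1/k, extended by q*(p) = 0 for p ≤ 1/k) is continuous at p = 1/k, i.e., q*(p) → 0 as p ↓ 1/k. -/
/-! Writing `t = p q`, the fixed-point equation reads `1 - q = (1 - t)^k`. The quadratic
Bernoulli bound `(1 - t)^k ≥ 1 - k t + t²` (valid for `t ≤ 1`) turns it into `p² q ≤ k p - 1`,
and the right-hand side of `q ≤ (k p - 1) / p²` tends to `0` as `p → 1/k`. -/

lemma one_sub_mul_add_sq_le_one_sub_pow {t : ℝ} (ht : t ≤ 1) {n : ℕ}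
    (hn : 2 ≤ n) : 1 - n * t + t ^ 2 ≤ (1 - t) ^ n := by
  induction n, hn using Nat.le_induction with
  | base => exact le_of_eq (by push_cast; ring)
  | succ n hn ih =>
    have hnt : t ≤ n := ht.trans (by exact_mod_cast (by omega : 1 ≤ n))
    calc 1 - ((n + 1 : ℕ) : ℝ) * t + t ^ 2 ≤ (1 - t) * (1 - n * t + t ^ 2) := by
          push_cast; nlinarith [mul_nonneg (sq_nonneg t) (sub_nonneg.mpr hnt)]
      _ ≤ (1 - t) * (1 - t) ^ n := mul_le_mul_of_nonneg_left ih (by linarith)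
      _ = (1 - t) ^ (n + 1) := by ring

lemma le_div_sq_of_eq_one_sub_one_sub_mul_pow {k : ℕ} (hk : 2 ≤ k) {p q : ℝ} (hp : 0 < p)
    (hq : 0 < q) (hpq : p * q ≤ 1) (hfix : 1 - (1 - p * q) ^ k = q) :
    q ≤ (k * p - 1) / p ^ 2 := by
  have hbern := one_sub_mul_add_sq_le_one_sub_pow hpq hk
  rw [le_div_iff₀ (by positivity)]
  refine le_of_mul_le_mul_left ?_ hq
  nlinarith

lemma tendsto_mul_sub_one_div_sq {k : ℝ} (hk : k ≠ 0) :
    Filter.Tendsto (fun p : ℝ => (k * p - 1) / p ^ 2) (nhds (1 / k)) (nhds 0) := by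
  have hcont : ContinuousAt (fun p : ℝ => (k * p - 1) / p ^ 2) (1 / k) :=
    by fun_prop (disch := simpa using hk)
  simpa [hk] using hcont.tendsto

theorem stmt8_general (k : ℕ) (hk : 2 ≤ k) (qstar : ℝ → ℝ)
    (h : ∀ p ∈ Set.Ioc (1/(k:ℝ)) 1,
      qstar p ∈ Set.Ioc (0:ℝ) 1 ∧ 1 - (1 - p * qstar p)^k = qstar p) :
    Filter.Tendsto qstar (nhdsWithin (1/(k:ℝ)) (Set.Ioi (1/(k:ℝ)))) (nhds 0) := by
  have hk1 : (1 : ℝ) < k := by exact_mod_cast hk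
  have hIoc : Set.Ioc (1 / (k : ℝ)) 1 ∈ nhdsWithin (1 / (k : ℝ)) (Set.Ioi (1 / (k : ℝ))) :=
    Ioc_mem_nhdsGT (by rw [div_lt_one (by linarith)]; exact hk1)
  refine squeeze_zero' ?_ ?_
    ((tendsto_mul_sub_one_div_sq (by positivity)).mono_left nhdsWithin_le_nhds)
  · filter_upwards [hIoc] with p hp
    exact (h p hp).1.1.le
  · filter_upwards [hIoc] with p hp
    obtain ⟨⟨hq0, hq1⟩, hfix⟩ := h p hp
    have hp0 : 0 < p := lt_trans (by positivity) hp.1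
    exact le_div_sq_of_eq_one_sub_one_sub_mul_pow hk hp0 hq0 (mul_le_one₀ hp.2 hq0.le hq1) hfix

theorem stmt8 (k : ℕ) (hk : 2 ≤ k) (qstar : ℝ → ℝ)
    (h : ∀ p ∈ Set.Ioc (1/(k:ℝ)) 1,
      qstar p ∈ Set.Ioc (0:ℝ) 1 ∧ 1 - (1 - p * qstar p)^k = qstar p)
    (h0 : ∀ p ∈ Set.Icc (0:ℝ) (1/(k:ℝ)), qstar p = 0) :
    Filter.Tendsto qstar (nhdsWithin (1/(k:ℝ)) (Set.Ioi (1/(k:ℝ)))) (nhds 0) :=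
  stmt8_general k hk qstar h
end

section
/- For a positive fixed point q ∈ (0,1) of q = 1 - (1 - p·q)^k, one can solve p = (1 - (1-q)^{1/k})/q, and this expression is strictly increasing in q on (0,1). -/
/- `(1 - (1 - q) ^ α) / q` is the slope of the secant of the strictly concave map
`u ↦ u ^ α` between `u = 1 - q` and `u = 1`; such slopes decrease as `u` grows, i.e. increase
with `q`. The fixed-point equation is `(1 - p q) ^ k = 1 - q`, and taking `k`-th roots of these
nonnegative numbers solves it for `p`. -/

theorem Real.strictMonoOn_one_sub_one_sub_rpow_div {α : ℝ} (hα₀ : 0 < α) (hα₁ : α < 1) :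
    StrictMonoOn (fun q : ℝ => (1 - (1 - q) ^ α) / q) (Set.Ioo 0 1) := by
  rintro x ⟨hx₀, hx₁⟩ y ⟨hy₀, hy₁⟩ hxy
  have hsecant := (Real.strictConcaveOn_rpow hα₀ hα₁).secant_strict_mono
    (a := 1) (x := 1 - y) (y := 1 - x) (by simp) (by simp; linarith) (by simp; linarith)
    (by linarith) (by linarith) (by linarith)
  convert hsecant using 1 <;> rw [Real.one_rpow, ← neg_div_neg_eq] <;> ring_nf

theorem Real.eq_one_sub_one_sub_mul_pow_iff {k : ℕ} (hk : k ≠ 0) {p q : ℝ} (hp : p ≤ 1)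
    (hq₀ : 0 < q) (hq₁ : q < 1) :
    q = 1 - (1 - p * q) ^ k ↔ p = (1 - (1 - q) ^ (k⁻¹ : ℝ)) / q := by
  have hpq : 0 ≤ 1 - p * q := by nlinarith
  calc q = 1 - (1 - p * q) ^ k
      ↔ (1 - p * q) ^ (k : ℝ) = 1 - q := by
        rw [Real.rpow_natCast]; constructor <;> intro <;> linarith
    _ ↔ 1 - p * q = (1 - q) ^ (k⁻¹ : ℝ) :=
      (Real.eq_rpow_inv hpq (by linarith) (Nat.cast_ne_zero.2 hk)).symm
    _ ↔ p = (1 - (1 - q) ^ (k⁻¹ : ℝ)) / q := by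
      rw [eq_div_iff hq₀.ne']; constructor <;> intro <;> linarith

theorem stmt9 (k : ℕ) (hk : 2 ≤ k) :
    StrictMonoOn (fun q : ℝ => (1 - (1-q) ^ ((k:ℝ)⁻¹)) / q) (Set.Ioo 0 1) ∧
    ∀ p ∈ Set.Icc (0:ℝ) 1, ∀ q ∈ Set.Ioo (0:ℝ) 1,
      (q = 1 - (1 - p*q)^k ↔ p = (1 - (1-q) ^ ((k:ℝ)⁻¹)) / q) := by
  have hk' : (1 : ℝ) < k := by exact_mod_cast hk
  refine ⟨Real.strictMonoOn_one_sub_one_sub_rpow_div (by positivity)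
      (inv_lt_one_of_one_lt₀ hk'),
    fun p hp q hq => Real.eq_one_sub_one_sub_mul_pow_iff (by omega) hp.2 hq.1 hq.2⟩
end

section
/- For k ≥ 2, the right derivative of the positive-fixed-point map q*(p) at p = 1/k equals 2k²/(k-1); that is, lim_{p ↓ 1/k} q*(p)/(p - 1/k) = 2k²/(k-1). -/
/-!
Put `t = p q` for a positive fixed point `q`. Since `1 - (1 - t)^k = t ∑_{j<k} (1 - t)^j`, the
fixed-point equation says `p ∑_{j<k} (1 - t)^j = 1`, and the identity
`k - ∑_{j<k} x^j = (1 - x) ∑_{j<k} ∑_{i<j} x^i` turns this into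
`k p - 1 = p² q U(1 - p q)` with `U(x) = sumGeomSum x k ≥ 1`. Hence `q ≤ (k p - 1) / p² → 0`,
and `q / (p - 1/k) = k / (p² U(1 - p q)) → k / (k⁻² U(1)) = 2k² / (k - 1)` as `U(1) = k(k - 1)/2`.
-/

open Filter Set Topology

section SumGeomSum

open Finset

variable {R : Type*}

def sumGeomSum [Semiring R] (x : R) (n : ℕ) : R :=
  ∑ j ∈ range n, ∑ i ∈ range j, x ^ i

theorem natCast_sub_geom_sum_eq [Ring R] (x : R) (n : ℕ) :
    (n : R) - ∑ j ∈ range n, x ^ j = (1 - x) * sumGeomSum x n := by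
  rw [sumGeomSum, mul_sum, sum_congr rfl fun j _ ↦ mul_neg_geom_sum x j, sum_sub_distrib]
  simp

theorem sumGeomSum_one (n : ℕ) : sumGeomSum (1 : ℝ) n = n * (n - 1) / 2 := by
  induction n with
  | zero => simp [sumGeomSum]
  | succ n ih =>
    simp only [sumGeomSum] at ih ⊢
    rw [sum_range_succ, ih]
    simp only [one_pow, sum_const, card_range, nsmul_one]
    push_cast
    ring

theorem one_le_sumGeomSum [Semiring R] [PartialOrder R] [IsOrderedRing R] {x : R} (hx : 0 ≤ x)
    {n : ℕ} (hn : 2 ≤ n) : 1 ≤ sumGeomSum x n :=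
  calc (1 : R) = ∑ i ∈ range 1, x ^ i := by simp
    _ ≤ sumGeomSum x n :=
      single_le_sum (f := fun j ↦ ∑ i ∈ range j, x ^ i)
        (fun j _ ↦ sum_nonneg fun i _ ↦ pow_nonneg hx i) (mem_range.2 (by omega))

theorem continuous_sumGeomSum [Semiring R] [TopologicalSpace R] [IsTopologicalSemiring R]
    (n : ℕ) : Continuous (sumGeomSum · n : R → R) := by
  unfold sumGeomSum
  fun_prop

end SumGeomSum

section FixedPoint

variable {k : ℕ} {p q : ℝ}

theorem natCast_mul_sub_one_eq_of_fixedPoint (hq : q ≠ 0) (h : 1 - (1 - p * q) ^ k = q) :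
    k * p - 1 = p ^ 2 * q * sumGeomSum (1 - p * q) k := by
  have hgeom := mul_neg_geom_sum (1 - p * q) k
  have hsum : p * ∑ j ∈ Finset.range k, (1 - p * q) ^ j = 1 :=
    mul_left_cancel₀ hq (by linear_combination hgeom + h)
  linear_combination p * natCast_sub_geom_sum_eq (1 - p * q) k + hsum

theorem one_le_sumGeomSum_one_sub_mul (hk : 2 ≤ k) (hp : p ≤ 1) (hq : q ∈ Icc 0 1) :
    1 ≤ sumGeomSum (1 - p * q) k :=
  one_le_sumGeomSum (by nlinarith [hq.1, hq.2]) hk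

theorem sq_mul_le_of_fixedPoint (hk : 2 ≤ k) (hp : p ≤ 1) (hq : q ∈ Ioc 0 1)
    (h : 1 - (1 - p * q) ^ k = q) : p ^ 2 * q ≤ k * p - 1 := by
  have hU := one_le_sumGeomSum_one_sub_mul hk hp (Ioc_subset_Icc_self hq)
  rw [natCast_mul_sub_one_eq_of_fixedPoint hq.1.ne' h]
  exact le_mul_of_one_le_right (by nlinarith [hq.1]) hU

theorem div_sub_one_div_eq_of_fixedPoint (hk : 2 ≤ k) (hp : 1 / k < p) (hp1 : p ≤ 1)
    (hq : q ∈ Ioc 0 1) (h : 1 - (1 - p * q) ^ k = q) :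
    q / (p - 1 / k) = k / (p ^ 2 * sumGeomSum (1 - p * q) k) := by
  have hU := one_le_sumGeomSum_one_sub_mul hk hp1 (Ioc_subset_Icc_self hq)
  have hp0 : 0 < p := lt_trans (by positivity) hp
  rw [div_eq_div_iff (by linarith) (by positivity), mul_sub, mul_one_div_cancel (by positivity)]
  linear_combination (natCast_mul_sub_one_eq_of_fixedPoint hq.1.ne' h).symm

end FixedPoint

theorem tendsto_natCast_div_sq_mul_sumGeomSum {k : ℕ} (hk : 2 ≤ k) {l : Filter ℝ}
    (hl : l ≤ 𝓝 (1 / (k : ℝ))) {q : ℝ → ℝ} (hq : Tendsto q l (𝓝 0)) :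
    Tendsto (fun p ↦ k / (p ^ 2 * sumGeomSum (1 - p * q p) k)) l (𝓝 (2 * k ^ 2 / (k - 1))) := by
  have hk1 : (0 : ℝ) < k - 1 := by
    rw [sub_pos]
    exact_mod_cast hk
  have hp : Tendsto id l (𝓝 (1 / k)) := tendsto_id.mono_left hl
  have hx : Tendsto (fun p ↦ 1 - p * q p) l (𝓝 1) := by
    simpa using tendsto_const_nhds.sub (hp.mul hq)
  have hden := (hp.pow 2).mul ((continuous_sumGeomSum k).tendsto 1 |>.comp hx)
  have hlim : 2 * (k : ℝ) ^ 2 / (k - 1) = k / ((1 / k) ^ 2 * sumGeomSum 1 k) := by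
    rw [sumGeomSum_one]
    field_simp
  rw [hlim]
  exact tendsto_const_nhds.div hden (by rw [sumGeomSum_one]; positivity)

theorem stmt10_general (k : ℕ) (hk : 2 ≤ k) (qstar : ℝ → ℝ)
    (h : ∀ p ∈ Set.Ioc (1/(k:ℝ)) 1,
      qstar p ∈ Set.Ioc (0:ℝ) 1 ∧ 1 - (1 - p * qstar p)^k = qstar p) :
    Filter.Tendsto (fun p => qstar p / (p - 1/(k:ℝ)))
      (nhdsWithin (1/(k:ℝ)) (Set.Ioi (1/(k:ℝ))))
      (nhds (2*(k:ℝ)^2/((k:ℝ)-1))) := by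
  have hk0 : (0 : ℝ) < k := by positivity
  have hIoc : Ioc (1 / (k : ℝ)) 1 ∈ 𝓝[>] (1 / (k : ℝ)) :=
    Ioc_mem_nhdsGT ((div_lt_one hk0).2 (by exact_mod_cast hk))
  have hbound : Tendsto (fun p : ℝ ↦ (k * p - 1) / p ^ 2) (𝓝[>] (1 / k)) (𝓝 0) := by
    have hg : ContinuousAt (fun p : ℝ ↦ (k * p - 1) / p ^ 2) (1 / k) := by
      fun_prop (disch := positivity)
    have := hg.tendsto.mono_left (nhdsWithin_le_nhds (s := Ioi (1 / (k : ℝ))))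
    rwa [mul_one_div_cancel hk0.ne', sub_self, zero_div] at this
  have hq0 : Tendsto qstar (𝓝[>] (1 / k)) (𝓝 0) := by
    refine squeeze_zero' ?_ ?_ hbound
    · filter_upwards [hIoc] with p hp using (h p hp).1.1.le
    · filter_upwards [hIoc] with p hp
      rw [le_div_iff₀ (by nlinarith [hp.1, one_div_pos.2 hk0]), mul_comm]
      exact sq_mul_le_of_fixedPoint hk hp.2 (h p hp).1 (h p hp).2
  refine (tendsto_natCast_div_sq_mul_sumGeomSum hk nhdsWithin_le_nhds hq0).congr' ?_
  filter_upwards [hIoc] with p hp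
  exact (div_sub_one_div_eq_of_fixedPoint hk hp.1 hp.2 (h p hp).1 (h p hp).2).symm

theorem stmt10 (k : ℕ) (hk : 2 ≤ k) (qstar : ℝ → ℝ)
    (h : ∀ p ∈ Set.Ioc (1/(k:ℝ)) 1,
      qstar p ∈ Set.Ioc (0:ℝ) 1 ∧ 1 - (1 - p * qstar p)^k = qstar p)
    (h0 : qstar (1/(k:ℝ)) = 0) :
    Filter.Tendsto (fun p => qstar p / (p - 1/(k:ℝ)))
      (nhdsWithin (1/(k:ℝ)) (Set.Ioi (1/(k:ℝ))))
      (nhds (2*(k:ℝ)^2/((k:ℝ)-1))) :=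
  stmt10_general k hk qstar h
end
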